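/- The function x parametrizing g = x(1+x+x²)/(1+4x+x²)² near g = 1/12 satisfies: if g = (1/12)(1 - a⁴ε⁴/36), then x = 1 - aε + a²ε²/2 - 5a³ε³/24 + a⁴ε⁴/12 + O(ε⁵) as ε → 0⁺ (taking the branch with 0 ≤ x ≤ 1). -/

import Mathlib

open Filter Asymptotics

/-!
Since `(1 + 4x + x²)² - 12x(1 + x + x²) = (1 - x)⁴`, the equation for `x` reduces, on taking
square roots, to the quadratic `(1 - x)² = (1 + 4x + x²) u² / 6` with `u = aε`. Its root `x ≤ 1`
is compared with the truncated series `p(u)`: the difference of the quadratic at `x` and at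
`p(u)` factors as `(x - p(u)) M` with `M ≤ -u`, while the residual of `p(u)` is `O(u⁶)`.
-/

/-- The fourth-order Taylor polynomial of the branch `x ≤ 1`, in the variable `u = aε`. -/
noncomputable def branchApprox (u : ℝ) : ℝ := 1 - u + u ^ 2 / 2 - 5 * u ^ 3 / 24 + u ^ 4 / 12

lemma sq_one_sub_eq_of_param_eq {x u : ℝ} (hx : 0 ≤ x)
    (h : x * (1 + x + x ^ 2) / (1 + 4 * x + x ^ 2) ^ 2 = 1 / 12 * (1 - u ^ 4 / 36)) :
    (1 - x) ^ 2 = (1 + 4 * x + x ^ 2) * u ^ 2 / 6 := by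
  have hD : (1 + 4 * x + x ^ 2) ^ 2 ≠ 0 := by positivity
  rw [div_eq_iff hD] at h
  have h4 : ((1 - x) ^ 2) ^ 2 = ((1 + 4 * x + x ^ 2) * u ^ 2 / 6) ^ 2 := by
    linear_combination -12 * h
  exact (sq_eq_sq₀ (sq_nonneg _) (by positivity)).mp h4

lemma abs_sub_branchApprox_le {x u : ℝ} (hu0 : 0 < u) (hu1 : u ≤ 1) (hx0 : 0 ≤ x) (hx1 : x ≤ 1)
    (h : (1 - x) ^ 2 = (1 + 4 * x + x ^ 2) * u ^ 2 / 6) :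
    |x - branchApprox u| ≤ u ^ 5 := by
  set p := branchApprox u with hp
  set M := (1 - u ^ 2 / 6) * (x + p) - (2 + 2 * u ^ 2 / 3) with hM
  set Q := -13 / 192 + u / 36 - 49 * u ^ 2 / 3456 + 5 * u ^ 3 / 864 - u ^ 4 / 864 with hQ
  have factor : (x - p) * M = -(u ^ 6 * Q) := by
    rw [hM, hQ, hp, branchApprox]
    linear_combination h
  have hu43 := pow_le_pow_of_le_one hu0.le hu1 (show 3 ≤ 4 by norm_num)
  have hu32 := pow_le_pow_of_le_one hu0.le hu1 (show 2 ≤ 3 by norm_num)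
  have hp0 : 0 ≤ p := by
    rw [hp, branchApprox]
    nlinarith
  have hp1 : p ≤ 1 - u + u ^ 2 / 2 := by
    rw [hp, branchApprox]
    linarith [pow_pos hu0 3]
  have hM_le : M ≤ -u := by
    have : 0 ≤ u ^ 2 / 6 * (x + p) := by positivity
    rw [hM]
    nlinarith
  have hQ_le : |Q| ≤ 1 := by
    have := pow_le_one₀ hu0.le hu1 (n := 2)
    rw [hQ, abs_le]
    constructor <;> linarith [pow_pos hu0 2, pow_pos hu0 3, pow_pos hu0 4]
  have key : |x - p| * u ≤ u ^ 5 * u :=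
    calc |x - p| * u ≤ |x - p| * |M| := by
          gcongr
          rw [abs_of_neg (by linarith)]
          linarith
      _ = u ^ 6 * |Q| := by
          rw [← abs_mul, factor, abs_neg, abs_mul, abs_of_pos (pow_pos hu0 6)]
      _ ≤ u ^ 6 * 1 := by gcongr
      _ = u ^ 5 * u := by ring
  exact le_of_mul_le_mul_right key hu0

theorem stmt_19 (a : ℝ) (ha : 0 < a) (x : ℝ → ℝ)
    (hx : ∀ᶠ ε in nhdsWithin (0 : ℝ) (Set.Ioi 0),
      x ε ∈ Set.Icc (0 : ℝ) 1 ∧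
      x ε * (1 + x ε + x ε ^ 2) / (1 + 4 * x ε + x ε ^ 2) ^ 2 =
        (1 / 12) * (1 - a ^ 4 * ε ^ 4 / 36)) :
    (fun ε : ℝ => x ε -
        (1 - a * ε + a ^ 2 * ε ^ 2 / 2 - 5 * a ^ 3 * ε ^ 3 / 24 + a ^ 4 * ε ^ 4 / 12))
      =O[nhdsWithin 0 (Set.Ioi 0)] fun ε : ℝ => ε ^ 5 := by
  refine isBigO_iff.mpr ⟨a ^ 5, ?_⟩
  filter_upwards [hx, Ioo_mem_nhdsGT (one_div_pos.mpr ha)]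
    with ε ⟨⟨hx0, hx1⟩, heq⟩ ⟨hε0, hεa⟩
  have hu1 : a * ε ≤ 1 := by
    rw [lt_div_iff₀ ha] at hεa
    linarith
  rw [show a ^ 4 * ε ^ 4 = (a * ε) ^ 4 by ring] at heq
  have hbound := abs_sub_branchApprox_le (mul_pos ha hε0) hu1 hx0 hx1
    (sq_one_sub_eq_of_param_eq hx0 heq)
  rw [Real.norm_eq_abs, Real.norm_eq_abs, abs_of_pos (pow_pos hε0 5), ← mul_pow]
  convert hbound using 3
  · simp only [branchApprox]; ring
  · ring
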